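/- Let i ≥ 0 be odd. Let f : V × V → E be a hermitian form on V (f(av,bw) = σ(a)b·f(v,w), f(w,v) = σ(f(v,w))) satisfying: f(x,y) ∈ B for all x ∈ B_i and y ∈ B_i^⊥, and f(x,y) − h(x,y) ∈ B for all x ∈ A_i and y ∈ B_i^⊥. Let g : V → V be an E-linear map with g(A_i) ⊆ A_i, gx − x ∈ B_i for all x ∈ A_i, g(B_i^⊥) ⊆ B_i^⊥, and gy − y ∈ A_i^⊥ for all y ∈ B_i^⊥. Then f(gx, gy) − h(x,y) ∈ B for all x ∈ A_i and y ∈ B_i^⊥; that is, the form f ∘ g again satisfies the congruence condition (e) defining the scheme H. -/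

import Mathlib

/-- For a subset `M ⊆ V`, the "dual" set `M^⊥ = {x ∈ V : H(x,M) ⊆ B}`. -/
def perpSet (B : Type*) {E V : Type*} [CommRing B] [Field E] [Algebra B E]
    [AddCommGroup V] [Module E V] (H : V → V → E) (S : Set V) : Set V :=
  {x | ∀ y ∈ S, ∃ b : B, H x y = algebraMap B E b}

/-- `A_i = {x ∈ L : h(x,L) ⊆ π^i B}`, viewed inside `V`. -/
def AiSetV {B E V : Type*} [CommRing B] [Field E] [Algebra B E]
    [AddCommGroup V] [Module E V] [Module B V]
    (L : Submodule B V) (π : B) (H : V → V → E) (i : ℕ) : Set V :=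
  {x | x ∈ L ∧ ∀ w ∈ L, ∃ b : B, H x w = algebraMap B E (π ^ i * b)}

/-- `B_i = {x ∈ A_i : h(x,x) ∈ 2^{m+1} A}` where `m = ⌈i/2⌉`, viewed inside `V`. -/
def BiSetV (A : Type*) {B E V : Type*} [CommRing A] [CommRing B] [Field E]
    [Algebra B E] [Algebra A E] [AddCommGroup V] [Module E V] [Module B V]
    (L : Submodule B V) (π : B) (H : V → V → E) (i : ℕ) : Set V :=
  {x | x ∈ AiSetV L π H i ∧ ∃ a : A, H x x = algebraMap A E (2 ^ ((i + 1) / 2 + 1) * a)}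

/-- `Y_i = {x ∈ B_i : h(x,B_i) ⊆ π^{i+1} B}`, viewed inside `V`. -/
def YiSetV (A : Type*) {B E V : Type*} [CommRing A] [CommRing B] [Field E]
    [Algebra B E] [Algebra A E] [AddCommGroup V] [Module E V] [Module B V]
    (L : Submodule B V) (π : B) (H : V → V → E) (i : ℕ) : Set V :=
  {x | x ∈ BiSetV A L π H i ∧
    ∀ w ∈ BiSetV A L π H i, ∃ b : B, H x w = algebraMap B E (π ^ (i + 1) * b)}

/-!
Modulo `B`, `f(gx, gy) ≡ h(gx, gy)` since `gx ∈ A_i` and `gy ∈ B_i^⊥`; then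
`h(gx, gy) - h(gx, y) = h(gx, gy - y)` is integral because `gy - y ∈ A_i^⊥`, and
`h(gx, y) - h(x, y) = h(gx - x, y)` is integral because `gx - x ∈ B_i`.
Hermitian symmetry is what lets `M^⊥`, defined by a condition in the first slot, be tested in
the second one.
-/

section SesquilinearForm

variable {E V : Type*} [AddCommGroup E] [AddCommGroup V] {H : V → V → E}

theorem form_sub_left (Hadd : ∀ x y z : V, H (x + y) z = H x z + H y z) (x x' y : V) :
    H (x - x') y = H x y - H x' y :=
  (AddMonoidHom.mk' (H · y) (Hadd · · y)).map_sub x x'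

theorem form_sub_right {F : Type*} [FunLike F E E] [AddMonoidHomClass F E E] {σE : F}
    (Hadd : ∀ x y z : V, H (x + y) z = H x z + H y z)
    (Hsymm : ∀ v w : V, H w v = σE (H v w)) (x y y' : V) :
    H x (y - y') = H x y - H x y' := by
  rw [Hsymm, form_sub_left Hadd, map_sub, ← Hsymm, ← Hsymm]

end SesquilinearForm

theorem exists_apply_eq_algebraMap_of_mem_perpSet {B E V : Type*} [CommRing B] [Field E]
    [Algebra B E] [AddCommGroup V] [Module E V] {H : V → V → E} {σE : E → E} {σ : B → B}
    (hσE : ∀ b : B, σE (algebraMap B E b) = algebraMap B E (σ b))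
    (Hsymm : ∀ v w : V, H w v = σE (H v w)) {S : Set V} {y z : V}
    (hy : y ∈ perpSet B H S) (hz : z ∈ S) : ∃ b : B, H z y = algebraMap B E b := by
  obtain ⟨b, hb⟩ := hy z hz
  exact ⟨σ b, by rw [Hsymm, hb, hσE]⟩

theorem condition_e_stable_under_action_general
    {A : Type*} [CommRing A]
    {B : Type*} [CommRing B] [Algebra A B]
    (π : B)
    (σ : B ≃ₐ[A] B)
    {E : Type*} [Field E] [Algebra B E]
    [Algebra A E]
    (σE : E ≃+* E) (hσE : ∀ b : B, σE (algebraMap B E b) = algebraMap B E (σ b))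
    {V : Type*} [AddCommGroup V] [Module E V] [Module B V]
    (H : V → V → E)
    (Hadd : ∀ x y z : V, H (x + y) z = H x z + H y z)
    (Hsymm : ∀ v w : V, H w v = σE (H v w))
    (L : Submodule B V)
    (i : ℕ)
    (f : V → V → E)
    (hf2 : ∀ x ∈ AiSetV L π H i, ∀ y ∈ perpSet B H (BiSetV A L π H i),
        ∃ b : B, f x y - H x y = algebraMap B E b)
    (g : V →ₗ[E] V)
    (hgA : ∀ x ∈ AiSetV L π H i, g x ∈ AiSetV L π H i)
    (hgAB : ∀ x ∈ AiSetV L π H i, g x - x ∈ BiSetV A L π H i)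
    (hgBp : ∀ y ∈ perpSet B H (BiSetV A L π H i), g y ∈ perpSet B H (BiSetV A L π H i))
    (hgBpA : ∀ y ∈ perpSet B H (BiSetV A L π H i), g y - y ∈ perpSet B H (AiSetV L π H i)) :
    ∀ x ∈ AiSetV L π H i, ∀ y ∈ perpSet B H (BiSetV A L π H i),
      ∃ b : B, f (g x) (g y) - H x y = algebraMap B E b := by
  intro x hx y hy
  obtain ⟨b₁, e₁⟩ := hf2 (g x) (hgA x hx) (g y) (hgBp y hy)
  obtain ⟨b₂, e₂⟩ :=
    exists_apply_eq_algebraMap_of_mem_perpSet hσE Hsymm (hgBpA y hy) (hgA x hx)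
  obtain ⟨b₃, e₃⟩ := exists_apply_eq_algebraMap_of_mem_perpSet hσE Hsymm hy (hgAB x hx)
  refine ⟨b₁ + b₂ + b₃, ?_⟩
  rw [map_add, map_add, ← e₁, ← e₂, ← e₃, form_sub_right Hadd Hsymm,
    form_sub_left Hadd]
  ring

/-- for odd `i`, if a hermitian form `f` on `V` satisfies `f(B_i, B_i^⊥) ⊆ B`
and `f(x,y) ≡ h(x,y) mod B` on `A_i × B_i^⊥`, and `g` is an `E`-linear map stabilizing
`A_i` and `B_i^⊥` and inducing the identity on `A_i/B_i` and on `B_i^⊥/A_i^⊥`, then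
`f(gx,gy) ≡ h(x,y) mod B` for all `x ∈ A_i`, `y ∈ B_i^⊥`. -/
theorem condition_e_stable_under_action
    {A : Type*} [CommRing A] [IsDomain A] [IsDiscreteValuationRing A] [CharZero A]
    (hmax : IsLocalRing.maximalIdeal A = Ideal.span {2})
    [IsAdicComplete (IsLocalRing.maximalIdeal A) A]
    [CharP (IsLocalRing.ResidueField A) 2]
    [PerfectRing (IsLocalRing.ResidueField A) 2]
    (δ : A) (hδunit : IsUnit δ) (hδ1 : (2 : A) ∣ (δ - 1))
    {B : Type*} [CommRing B] [IsDomain B] [Algebra A B]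
    (π : B) (hπ : π ^ 2 = algebraMap A B (2 * δ))
    (σ : B ≃ₐ[A] B) (hσπ : σ π = -π) (hσinv : ∀ b : B, σ (σ b) = b)
    (hBfree : ∀ b : B, ∃! p : A × A, b = algebraMap A B p.1 + algebraMap A B p.2 * π)
    {E : Type*} [Field E] [Algebra B E] [IsFractionRing B E]
    [Algebra A E] [IsScalarTower A B E]
    (σE : E ≃+* E) (hσE : ∀ b : B, σE (algebraMap B E b) = algebraMap B E (σ b))
    {V : Type*} [AddCommGroup V] [Module E V] [Module B V] [IsScalarTower B E V]
    (H : V → V → E)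
    (Hadd : ∀ x y z : V, H (x + y) z = H x z + H y z)
    (Hsmul : ∀ (a b : E) (v w : V), H (a • v) (b • w) = σE a * b * H v w)
    (Hsymm : ∀ v w : V, H w v = σE (H v w))
    (Hnd : ∀ v : V, (∀ w : V, H v w = 0) → v = 0)
    (L : Submodule B V) [Module.Free B L] [Module.Finite B L]
    (hLspan : Submodule.span E (L : Set V) = ⊤)
    (hLB : ∀ x ∈ L, ∀ y ∈ L, ∃ b : B, H x y = algebraMap B E b)
    (i : ℕ) (hi : Odd i)
    (f : V → V → E)
    (fadd : ∀ x y z : V, f (x + y) z = f x z + f y z)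
    (fsmul : ∀ (a b : E) (v w : V), f (a • v) (b • w) = σE a * b * f v w)
    (fsymm : ∀ v w : V, f w v = σE (f v w))
    (hf1 : ∀ x ∈ BiSetV A L π H i, ∀ y ∈ perpSet B H (BiSetV A L π H i),
        ∃ b : B, f x y = algebraMap B E b)
    (hf2 : ∀ x ∈ AiSetV L π H i, ∀ y ∈ perpSet B H (BiSetV A L π H i),
        ∃ b : B, f x y - H x y = algebraMap B E b)
    (g : V →ₗ[E] V)
    (hgA : ∀ x ∈ AiSetV L π H i, g x ∈ AiSetV L π H i)
    (hgAB : ∀ x ∈ AiSetV L π H i, g x - x ∈ BiSetV A L π H i)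
    (hgBp : ∀ y ∈ perpSet B H (BiSetV A L π H i), g y ∈ perpSet B H (BiSetV A L π H i))
    (hgBpA : ∀ y ∈ perpSet B H (BiSetV A L π H i), g y - y ∈ perpSet B H (AiSetV L π H i)) :
    ∀ x ∈ AiSetV L π H i, ∀ y ∈ perpSet B H (BiSetV A L π H i),
      ∃ b : B, f (g x) (g y) - H x y = algebraMap B E b :=
  condition_e_stable_under_action_general π σ σE hσE H Hadd Hsymm L i f hf2 g hgA hgAB hgBp hgBpA
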